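/- arXiv:2107.08404 — 2 statements merged into one kernel-verified Lean document; each statement's English description precedes it below -/
import Mathlib

section
/- Let p, q > 0 and C ≥ 1. Suppose that for all n ≥ 1 and all finite families (x_i) of positive semidefinite n×n complex matrices one has ‖(∑_i x_i^q)^{1/q}‖_p ≤ C ‖∑_i x_i‖_p. Then in fact ‖(∑_i x_i^q)^{1/q}‖_p ≤ ‖∑_i x_i‖_p for all such families (the constant can be improved to 1). -/
open scoped ENNReal ComplexOrder
open Matrix

open Matrix in
/-- Power of a positive semidefinite matrix via the functional calculus
(junk value `0` if the matrix is not Hermitian). -/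
noncomputable def mpow {ι : Type*} [Fintype ι] [DecidableEq ι]
    (a : Matrix ι ι ℂ) (p : ℝ) : Matrix ι ι ℂ :=
  if ha : a.IsHermitian then ha.cfc (fun x => x ^ p) else 0

open Matrix in
/-- Schatten `p`-(quasi)norm for `0 < p < ∞`: `‖a‖_p = (tr |a|^p)^(1/p)`,
where `|a|^p = (aᴴ a)^(p/2)`. -/
noncomputable def snorm {ι : Type*} [Fintype ι] [DecidableEq ι]
    (p : ℝ) (a : Matrix ι ι ℂ) : ℝ :=
  ((mpow (aᴴ * a) (p / 2)).trace).re ^ (1 / p)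

open Matrix in
/-- Schatten norm for `p ∈ (0, ∞]`; `p = ∞` gives the operator norm. -/
noncomputable def snormE {ι : Type*} [Fintype ι] [DecidableEq ι]
    (p : ℝ≥0∞) (a : Matrix ι ι ℂ) : ℝ :=
  if p = ∞ then ‖Matrix.toEuclideanCLM (𝕜 := ℂ) a‖ else snorm p.toReal a

/-!
For positive semidefinite `xᵢ`, both sides are `p`-th roots of traces of powers:
`‖(∑ xᵢ^q)^(1/q)‖_p = (tr (∑ xᵢ^q)^(p/q))^(1/p)` and
`‖∑ xᵢ‖_p = (tr (∑ xᵢ)^p)^(1/p)`. Since `(a ⊗ b)^s = a^s ⊗ b^s` and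
`tr (a ⊗ b) = tr a · tr b`, both traces `A`, `B` are multiplicative under the Kronecker
product of families `(xᵢ ⊗ yⱼ)ᵢⱼ`. Applied to the `k`-fold Kronecker power of the family,
the hypothesis therefore reads `A^k ≤ C B^k` for all `k`, which forces `A ≤ B`.
-/

open Kronecker Unitary

lemma Matrix.sum_kronecker_sum {R ι ι' κ κ' m m' : Type*} [Semiring R] [Fintype m] [Fintype m']
    (x : m → Matrix ι ι' R) (y : m' → Matrix κ κ' R) :
    (∑ i, x i) ⊗ₖ (∑ j, y j) = ∑ c : m × m', x c.1 ⊗ₖ y c.2 := by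
  ext ⟨i, j⟩ ⟨k, l⟩
  simp only [sum_apply, kroneckerMap_apply, Finset.sum_mul_sum, Fintype.sum_prod_type]

variable {ι κ : Type*} [Fintype ι] [DecidableEq ι] [Fintype κ] [DecidableEq κ]

-- Unlike in `IsHermitian.spectral_theorem`, the unitary is arbitrary: `u ⊗ₖ v` diagonalizes
-- `a ⊗ₖ b`, but it is not the `eigenvectorUnitary` of `a ⊗ₖ b`.
def IsSpectralDecomp (a : Matrix ι ι ℂ) (u : unitary (Matrix ι ι ℂ)) (d : ι → ℝ) :
    Prop :=
  a = conjStarAlgAut ℂ _ u (diagonal (RCLike.ofReal ∘ d))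

lemma Matrix.IsHermitian.isSpectralDecomp {a : Matrix ι ι ℂ} (ha : a.IsHermitian) :
    IsSpectralDecomp a ha.eigenvectorUnitary ha.eigenvalues :=
  ha.spectral_theorem

lemma isSpectralDecomp_one : IsSpectralDecomp (1 : Matrix ι ι ℂ) 1 1 := by
  simp [IsSpectralDecomp, Function.comp_def]

namespace IsSpectralDecomp

variable {a : Matrix ι ι ℂ} {u : unitary (Matrix ι ι ℂ)} {d : ι → ℝ}

lemma isHermitian (h : IsSpectralDecomp a u d) : a.IsHermitian := by
  rw [h, IsHermitian, ← star_eq_conjTranspose, ← map_star, star_eq_conjTranspose,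
    diagonal_conjTranspose]
  congr
  ext
  simp

lemma spectrum_eq (h : IsSpectralDecomp a u d) : spectrum ℝ a = Set.range d := by
  ext x
  rw [h, conjStarAlgAut_apply, Unitary.spectrum_star_right_conjugate,
    ← spectrum.algebraMap_mem_iff ℂ, spectrum_diagonal]
  simp

noncomputable def cfcAux (h : IsSpectralDecomp a u d) :
    C(spectrum ℝ a, ℝ) →⋆ₐ[ℝ] Matrix ι ι ℂ where
  toFun g := conjStarAlgAut ℂ _ u <|
    diagonal (RCLike.ofReal ∘ g ∘ fun i ↦ ⟨d i, h.spectrum_eq ▸ Set.mem_range_self i⟩)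
  map_zero' := by simp [Pi.zero_def, Function.comp_def]
  map_one' := by simp [Pi.one_def, Function.comp_def]
  map_mul' f g := by
    simp only [ContinuousMap.coe_mul, ← map_mul, diagonal_mul_diagonal, Function.comp_apply]
    rfl
  map_add' f g := by
    simp only [ContinuousMap.coe_add, ← map_add, diagonal_add, Function.comp_apply]
    rfl
  commutes' r := by
    simp only [Function.comp_def, algebraMap_apply, smul_eq_mul, mul_one]
    rw [← mul_one (algebraMap _ _ _), ← coe_mul_star_self u,
      ← Algebra.left_comm, coe_star, ← mul_assoc, conjStarAlgAut_apply]
    rfl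
  map_star' f := by
    simp only [star_trivial, ← map_star, star_eq_conjTranspose, diagonal_conjTranspose,
      Pi.star_def, Function.comp_apply, RCLike.star_def, RCLike.conj_ofReal]
    rfl

lemma cfc_eq (h : IsSpectralDecomp a u d) (f : ℝ → ℝ) :
    cfc f a = conjStarAlgAut ℂ _ u (diagonal (RCLike.ofReal ∘ f ∘ d)) := by
  have ha : IsSelfAdjoint a := h.isHermitian
  have hcont : Continuous h.cfcAux := by
    refine (continuous_const.matrix_mul ?_).matrix_mul continuous_const
    exact .matrix_diagonal <| continuous_pi fun i ↦
      RCLike.continuous_ofReal.comp (continuous_eval_const _)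
  have hid : h.cfcAux (.restrict (spectrum ℝ a) (.id ℝ)) = a := by
    conv_rhs => rw [h]
    rfl
  rw [cfc_apply f a ha (by rw [continuousOn_iff_continuous_domRestrict]; fun_prop),
    cfcHom_eq_of_continuous_of_map_id ha h.cfcAux hcont hid]
  rfl

lemma mpow (h : IsSpectralDecomp a u d) (r : ℝ) :
    IsSpectralDecomp (mpow a r) u (fun i ↦ d i ^ r) := by
  rw [_root_.mpow, dif_pos h.isHermitian, ← IsHermitian.cfc_eq]
  exact h.cfc_eq _

lemma mul_self (h : IsSpectralDecomp a u d) : IsSpectralDecomp (a * a) u (d * d) := by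
  rw [IsSpectralDecomp, h, ← map_mul, diagonal_mul_diagonal]
  congr
  ext
  simp

lemma re_trace (h : IsSpectralDecomp a u d) : a.trace.re = ∑ i, d i := by
  rw [h, conjStarAlgAut_apply, trace_mul_cycle, coe_star_mul_self, one_mul, trace_diagonal]
  simp

lemma posSemidef (h : IsSpectralDecomp a u d) (hd : 0 ≤ d) : a.PosSemidef := by
  rw [h, conjStarAlgAut_apply, isUnit_coe.posSemidef_star_right_conjugate_iff,
    posSemidef_diagonal_iff]
  intro i
  simpa using hd i

lemma kronecker {b : Matrix κ κ ℂ} {v : unitary (Matrix κ κ ℂ)} {e : κ → ℝ}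
    (h : IsSpectralDecomp a u d) (h' : IsSpectralDecomp b v e) :
    IsSpectralDecomp (a ⊗ₖ b) ⟨_, kronecker_mem_unitary u.2 v.2⟩
      (fun x ↦ d x.1 * e x.2) := by
  rw [IsSpectralDecomp, h, h']
  simp only [conjStarAlgAut_apply, mul_kronecker_mul, diagonal_kronecker_diagonal,
    star_eq_conjTranspose, conjTranspose_kronecker]
  congr
  ext
  simp

end IsSpectralDecomp

section Powers

variable {a : Matrix ι ι ℂ} {b : Matrix κ κ ℂ}

lemma Matrix.PosSemidef.exists_isSpectralDecomp (ha : a.PosSemidef) :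
    ∃ u d, 0 ≤ d ∧ IsSpectralDecomp a u d :=
  ⟨_, _, fun i ↦ ha.eigenvalues_nonneg i, ha.isHermitian.isSpectralDecomp⟩

lemma Matrix.PosSemidef.mpow (ha : a.PosSemidef) (r : ℝ) : (mpow a r).PosSemidef := by
  obtain ⟨u, d, hd, h⟩ := ha.exists_isSpectralDecomp
  exact (h.mpow r).posSemidef fun i ↦ Real.rpow_nonneg (hd i) r

lemma mpow_one (ha : a.IsHermitian) : mpow a 1 = a := by
  have h1 := ha.isSpectralDecomp.mpow 1
  simp only [Real.rpow_one] at h1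
  exact h1.trans ha.isSpectralDecomp.symm

lemma mpow_kronecker (ha : a.PosSemidef) (hb : b.PosSemidef) (r : ℝ) :
    mpow (a ⊗ₖ b) r = mpow a r ⊗ₖ mpow b r := by
  obtain ⟨u, d, hd, h⟩ := ha.exists_isSpectralDecomp
  obtain ⟨v, e, he, h'⟩ := hb.exists_isSpectralDecomp
  rw [(h.kronecker h').mpow r, (h.mpow r).kronecker (h'.mpow r)]
  simp_rw [Real.mul_rpow (hd _) (he _)]

def Matrix.reindexStarAlgEquiv {R A : Type*} [CommSemiring R] [Semiring A] [StarRing A]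
    [Algebra R A] (e : ι ≃ κ) : Matrix ι ι A ≃⋆ₐ[R] Matrix κ κ A where
  __ := reindexAlgEquiv R A e
  map_smul' := map_smul (reindexAlgEquiv R A e)
  map_star' _ := by simp [star_eq_conjTranspose]

lemma mpow_reindex (ha : a.IsHermitian) (e : ι ≃ κ) (r : ℝ) :
    mpow (reindex e e a) r = reindex e e (mpow a r) := by
  have ha' : (reindex e e a).IsHermitian := ha.submatrix _
  rw [_root_.mpow, _root_.mpow, dif_pos ha, dif_pos ha', ← ha.cfc_eq, ← ha'.cfc_eq]
  exact (StarAlgHomClass.map_cfc (reindexStarAlgEquiv (R := ℂ) e) _ a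
    (by rw [continuousOn_iff_continuous_domRestrict]; fun_prop)
    (continuous_id.matrix_reindex e e)).symm

end Powers

noncomputable def trPow (s : ℝ) (a : Matrix ι ι ℂ) : ℝ := (mpow a s).trace.re

section TracePowers

variable {a : Matrix ι ι ℂ} {b : Matrix κ κ ℂ}

lemma IsSpectralDecomp.trPow_eq {u : unitary (Matrix ι ι ℂ)} {d : ι → ℝ}
    (h : IsSpectralDecomp a u d) (s : ℝ) : trPow s a = ∑ i, d i ^ s :=
  (h.mpow s).re_trace

lemma trPow_nonneg (ha : a.PosSemidef) (s : ℝ) : 0 ≤ trPow s a := by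
  obtain ⟨u, d, hd, h⟩ := ha.exists_isSpectralDecomp
  rw [h.trPow_eq]
  exact Finset.sum_nonneg fun i _ ↦ Real.rpow_nonneg (hd i) s

lemma trPow_mpow (ha : a.PosSemidef) (r s : ℝ) : trPow s (mpow a r) = trPow (r * s) a := by
  obtain ⟨u, d, hd, h⟩ := ha.exists_isSpectralDecomp
  rw [(h.mpow r).trPow_eq, h.trPow_eq]
  simp_rw [← Real.rpow_mul (hd _)]

lemma trPow_kronecker (ha : a.PosSemidef) (hb : b.PosSemidef) (s : ℝ) :
    trPow s (a ⊗ₖ b) = trPow s a * trPow s b := by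
  obtain ⟨u, d, hd, h⟩ := ha.exists_isSpectralDecomp
  obtain ⟨v, e, he, h'⟩ := hb.exists_isSpectralDecomp
  rw [(h.kronecker h').trPow_eq, h.trPow_eq, h'.trPow_eq, Finset.sum_mul_sum,
    Fintype.sum_prod_type]
  simp_rw [Real.mul_rpow (hd _) (he _)]

lemma trPow_reindex (ha : a.IsHermitian) (e : ι ≃ κ) (s : ℝ) :
    trPow s (reindex e e a) = trPow s a := by
  rw [trPow, trPow, mpow_reindex ha, trace, trace]
  simp only [reindex_apply, submatrix_apply, diag_apply]
  rw [Equiv.sum_comp e.symm (fun i ↦ mpow a s i i)]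

lemma snorm_eq_trPow {p : ℝ} (ha : a.PosSemidef) : snorm p a = trPow p a ^ (1 / p) := by
  obtain ⟨u, d, hd, h⟩ := ha.exists_isSpectralDecomp
  rw [snorm, ha.isHermitian.eq, ← trPow, h.mul_self.trPow_eq, h.trPow_eq]
  congr 1
  refine Finset.sum_congr rfl fun i _ ↦ ?_
  rw [Pi.mul_apply, ← sq, ← Real.rpow_two, ← Real.rpow_mul (hd i)]
  ring_nf

lemma trPow_one (s : ℝ) : trPow s (1 : Matrix ι ι ℂ) = Fintype.card ι := by
  simp [isSpectralDecomp_one.trPow_eq]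

end TracePowers

section Families

variable {m m' : Type*} [Fintype m] [Fintype m']

lemma posSemidef_sum_mpow {x : m → Matrix ι ι ℂ} (hx : ∀ i, (x i).PosSemidef) (r : ℝ) :
    (∑ i, mpow (x i) r).PosSemidef :=
  posSemidef_sum _ fun i _ ↦ (hx i).mpow r

lemma trPow_sum_mpow_kronecker {x : m → Matrix ι ι ℂ} {y : m' → Matrix κ κ ℂ}
    (hx : ∀ i, (x i).PosSemidef) (hy : ∀ j, (y j).PosSemidef) (r s : ℝ) :
    trPow s (∑ c : m × m', mpow (x c.1 ⊗ₖ y c.2) r) =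
      trPow s (∑ i, mpow (x i) r) * trPow s (∑ j, mpow (y j) r) := by
  rw [← trPow_kronecker (posSemidef_sum_mpow hx r) (posSemidef_sum_mpow hy r), sum_kronecker_sum]
  simp_rw [mpow_kronecker (hx _) (hy _)]

lemma trPow_sum_mpow_reindex {x : m → Matrix ι ι ℂ} (hx : ∀ i, (x i).PosSemidef)
    (e : ι ≃ κ) (σ : m' ≃ m) (r s : ℝ) :
    trPow s (∑ i, mpow (reindex e e (x (σ i))) r) = trPow s (∑ i, mpow (x i) r) := by
  have hsum : ∑ i, reindex e e (mpow (x (σ i)) r) = reindex e e (∑ i, mpow (x i) r) := by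
    rw [Equiv.sum_comp σ (fun i ↦ reindex e e (mpow (x i) r))]
    exact (map_sum (reindexStarAlgEquiv (R := ℂ) e) _ _).symm
  simp_rw [mpow_reindex (hx _).isHermitian, hsum,
    trPow_reindex (posSemidef_sum_mpow hx r).isHermitian]

lemma snorm_mpow_inv_sum_mpow_eq_trPow {x : m → Matrix ι ι ℂ} (hx : ∀ i, (x i).PosSemidef)
    (p q : ℝ) :
    snorm p (mpow (∑ i, mpow (x i) q) (1 / q)) =
      trPow (p / q) (∑ i, mpow (x i) q) ^ (1 / p) := by
  have hS := posSemidef_sum_mpow hx q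
  rw [snorm_eq_trPow (hS.mpow _), trPow_mpow hS, one_div_mul_eq_div]

-- Written with `mpow (x i) 1` so that both sides of the theorem fit
-- `trPow_sum_mpow_kroneckerPow`.
lemma snorm_sum_eq_trPow {x : m → Matrix ι ι ℂ} (hx : ∀ i, (x i).PosSemidef) (p : ℝ) :
    snorm p (∑ i, x i) = trPow p (∑ i, mpow (x i) 1) ^ (1 / p) := by
  simp_rw [mpow_one (hx _).isHermitian]
  exact snorm_eq_trPow (posSemidef_sum _ fun i _ ↦ hx i)

end Families

def finPowSuccEquiv (N k : ℕ) : Fin (N ^ k) × Fin N ≃ Fin (N ^ (k + 1)) :=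
  finProdFinEquiv.trans (finCongr (pow_succ N k).symm)

variable {n N : ℕ}

def kroneckerPow {R : Type*} [Semiring R] (x : Fin N → Matrix (Fin n) (Fin n) R) :
    (k : ℕ) → Fin (N ^ k) → Matrix (Fin (n ^ k)) (Fin (n ^ k)) R
  | 0 => fun _ ↦ 1
  | k + 1 => fun i ↦ reindex (finPowSuccEquiv n k) (finPowSuccEquiv n k)
      (kroneckerPow x k ((finPowSuccEquiv N k).symm i).1 ⊗ₖ x ((finPowSuccEquiv N k).symm i).2)

lemma posSemidef_kroneckerPow {x : Fin N → Matrix (Fin n) (Fin n) ℂ}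
    (hx : ∀ i, (x i).PosSemidef) : ∀ k i, (kroneckerPow x k i).PosSemidef
  | 0, _ => .one
  | k + 1, _ => ((posSemidef_kroneckerPow hx k _).kronecker (hx _)).submatrix _

lemma trPow_sum_mpow_kroneckerPow {x : Fin N → Matrix (Fin n) (Fin n) ℂ}
    (hx : ∀ i, (x i).PosSemidef) (r s : ℝ) :
    ∀ k, trPow s (∑ i, mpow (kroneckerPow x k i) r) = trPow s (∑ i, mpow (x i) r) ^ k
  | 0 => by
    simp only [kroneckerPow, Finset.sum_const, Finset.card_univ, Fintype.card_fin, pow_zero,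
      one_smul, trPow_mpow PosSemidef.one, trPow_one, Nat.cast_one]
  | k + 1 => by
    rw [kroneckerPow, trPow_sum_mpow_reindex
        (x := fun c : Fin (N ^ k) × Fin N ↦ kroneckerPow x k c.1 ⊗ₖ x c.2)
        (fun c ↦ (posSemidef_kroneckerPow hx k _).kronecker (hx _)),
      trPow_sum_mpow_kronecker (posSemidef_kroneckerPow hx k) hx,
      trPow_sum_mpow_kroneckerPow hx r s k, pow_succ]

lemma le_of_forall_pow_le_mul_pow {α : Type*} [Field α] [LinearOrder α] [IsStrictOrderedRing α]
    [Archimedean α] {a b C : α} (hb : 0 ≤ b) (h : ∀ k : ℕ, a ^ k ≤ C * b ^ k) :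
    a ≤ b := by
  by_contra! hba
  rcases hb.eq_or_lt with rfl | hb
  · simpa [hba.not_ge] using h 1
  obtain ⟨k, hk⟩ := pow_unbounded_of_one_lt C ((one_lt_div hb).2 hba)
  rw [div_pow, lt_div_iff₀ (pow_pos hb k)] at hk
  linarith [h k]

theorem stmt10_general {p q : ℝ} (C : ℝ)
    (h : ∀ (n N : ℕ), 1 ≤ n → ∀ (x : Fin N → Matrix (Fin n) (Fin n) ℂ),
      (∀ i, (x i).PosSemidef) →
      snorm p (mpow (∑ i, mpow (x i) q) (1 / q)) ≤ C * snorm p (∑ i, x i)) :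
    ∀ (n N : ℕ), 1 ≤ n → ∀ (x : Fin N → Matrix (Fin n) (Fin n) ℂ),
      (∀ i, (x i).PosSemidef) →
      snorm p (mpow (∑ i, mpow (x i) q) (1 / q)) ≤ snorm p (∑ i, x i) := by
  intro n N hn x hx
  have hA := trPow_nonneg (posSemidef_sum_mpow hx q) (p / q)
  have hB := trPow_nonneg (posSemidef_sum_mpow hx 1) p
  rw [snorm_mpow_inv_sum_mpow_eq_trPow hx, snorm_sum_eq_trPow hx]
  refine le_of_forall_pow_le_mul_pow (C := C) (Real.rpow_nonneg hB _) fun k ↦ ?_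
  have hxk := posSemidef_kroneckerPow hx k
  have hk := h (n ^ k) (N ^ k) (Nat.one_le_pow _ _ hn) (kroneckerPow x k) hxk
  rwa [snorm_mpow_inv_sum_mpow_eq_trPow hxk, snorm_sum_eq_trPow hxk,
    trPow_sum_mpow_kroneckerPow hx, trPow_sum_mpow_kroneckerPow hx,
    ← Real.rpow_pow_comm hA, ← Real.rpow_pow_comm hB] at hk

theorem stmt10 {p q : ℝ} (hp : 0 < p) (hq : 0 < q) (C : ℝ) (hC : 1 ≤ C)
    (h : ∀ (n N : ℕ), 1 ≤ n → ∀ (x : Fin N → Matrix (Fin n) (Fin n) ℂ),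
      (∀ i, (x i).PosSemidef) →
      snorm p (mpow (∑ i, mpow (x i) q) (1 / q)) ≤ C * snorm p (∑ i, x i)) :
    ∀ (n N : ℕ), 1 ≤ n → ∀ (x : Fin N → Matrix (Fin n) (Fin n) ℂ),
      (∀ i, (x i).PosSemidef) →
      snorm p (mpow (∑ i, mpow (x i) q) (1 / q)) ≤ snorm p (∑ i, x i) :=
  stmt10_general C h
end

section
/- Let 0 < p < 1, x = [[1,1],[1,1]] and y_t = [[0,0],[0,t]] for t > 0. Then lim_{t → 0+} (‖x + y_t‖_p^p − 2^p)/t^p = 2^{-p}, where ‖·‖_p denotes the Schatten p-quasinorm, i.e. ‖a‖_p^p is the sum of the p-th powers of the eigenvalues of the positive matrix a. -/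
/-!
The matrix `x + y_t = !![1, 1; 1, 1 + t]` is Hermitian with trace `2 + t` and determinant `t`, so
its eigenvalues are `λ± = (2 + t ± √(4 + t²)) / 2` and `‖x + y_t‖_p^p = λ₊ ^ p + λ₋ ^ p`.
Since `λ₊ λ₋ = t`, the second term divided by `t ^ p` is `λ₊ ^ (-p) → 2 ^ (-p)`, while
`λ₊ ^ p - 2 ^ p = O(t) = o(t ^ p)` because `p < 1`.
-/

open scoped ENNReal ComplexOrder
open Matrix

open Filter Topology

namespace Matrix

lemma IsHermitian.trace_cfc {n : Type*} [Fintype n] [DecidableEq n] {A : Matrix n n ℂ}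
    (hA : A.IsHermitian) (f : ℝ → ℝ) :
    (hA.cfc f).trace = ∑ i, (f (hA.eigenvalues i) : ℂ) := by
  rw [IsHermitian.cfc, Unitary.conjStarAlgAut_apply, trace_mul_cycle, Unitary.coe_star_mul_self,
    one_mul, trace_diagonal]
  simp

lemma IsHermitian.sum_eigenvalues_fin_two {A : Matrix (Fin 2) (Fin 2) ℂ} (hA : A.IsHermitian)
    {r s : ℝ} (htr : A.trace = r + s) (hdet : A.det = r * s) (f : ℝ → ℝ) :
    ∑ i, f (hA.eigenvalues i) = f r + f s := by
  have hsum : hA.eigenvalues 0 + hA.eigenvalues 1 = r + s := by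
    simpa [Fin.sum_univ_two, htr] using congrArg Complex.re hA.trace_eq_sum_eigenvalues.symm
  have hprod : hA.eigenvalues 0 * hA.eigenvalues 1 = r * s := by
    simpa [Fin.prod_univ_two, hdet] using congrArg Complex.re hA.det_eq_prod_eigenvalues.symm
  rw [Fin.sum_univ_two]
  generalize hA.eigenvalues 0 = e₀, hA.eigenvalues 1 = e₁ at hsum hprod ⊢
  have hroot : (e₀ - r) * (e₀ - s) = 0 := by linear_combination e₀ * hsum - hprod
  rcases mul_eq_zero.1 hroot with h | h
  · rw [show e₀ = r by linarith, show e₁ = s by linarith]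
  · rw [show e₀ = s by linarith, show e₁ = r by linarith, add_comm]

lemma trace_mul_self_fin_two {R : Type*} [CommRing R] (A : Matrix (Fin 2) (Fin 2) R) :
    (A * A).trace = A.trace ^ 2 - 2 * A.det := by
  simp only [trace_fin_two, det_fin_two, mul_apply, Fin.sum_univ_two]
  ring

end Matrix

lemma snorm_rpow_eq_sum {ι : Type*} [Fintype ι] [DecidableEq ι] {p : ℝ} (hp : 0 < p)
    (a : Matrix ι ι ℂ) :
    snorm p a ^ p = ∑ i, (isHermitian_conjTranspose_mul_self a).eigenvalues i ^ (p / 2) := by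
  have hB := isHermitian_conjTranspose_mul_self a
  have hsum_nonneg : 0 ≤ ∑ i, hB.eigenvalues i ^ (p / 2) := Finset.sum_nonneg fun i _ =>
    Real.rpow_nonneg ((posSemidef_conjTranspose_mul_self a).eigenvalues_nonneg i) _
  have htrace : ((mpow (aᴴ * a) (p / 2)).trace).re = ∑ i, hB.eigenvalues i ^ (p / 2) := by
    rw [mpow, dif_pos hB, hB.trace_cfc, ← Complex.ofReal_sum, Complex.ofReal_re]
  rw [snorm, htrace, ← Real.rpow_mul hsum_nonneg, one_div_mul_cancel hp.ne', Real.rpow_one]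

lemma snorm_rpow_fin_two_of_isHermitian {p : ℝ} (hp : 0 < p) {a : Matrix (Fin 2) (Fin 2) ℂ}
    (ha : a.IsHermitian) {σ τ : ℝ} (hσ : 0 ≤ σ) (hτ : 0 ≤ τ) (htr : a.trace = σ + τ)
    (hdet : a.det = σ * τ) :
    snorm p a ^ p = σ ^ p + τ ^ p := by
  have hsq_rpow {x : ℝ} (hx : 0 ≤ x) : (x ^ 2) ^ (p / 2) = x ^ p := by
    rw [← Real.rpow_natCast_mul hx]
    ring_nf
  rw [snorm_rpow_eq_sum hp, ← hsq_rpow hσ, ← hsq_rpow hτ]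
  apply (isHermitian_conjTranspose_mul_self a).sum_eigenvalues_fin_two (f := (· ^ (p / 2)))
  · rw [ha.eq, trace_mul_self_fin_two, htr, hdet]
    push_cast
    ring
  · rw [ha.eq, det_mul, hdet]
    push_cast
    ring

/-- The two eigenvalues `(2 + t ± √(4 + t²)) / 2` of `!![1, 1; 1, 1 + t]`. -/
noncomputable def eigPlus (t : ℝ) : ℝ := (2 + t + √(4 + t ^ 2)) / 2

noncomputable def eigMinus (t : ℝ) : ℝ := (2 + t - √(4 + t ^ 2)) / 2

section eigenvalues

variable {t : ℝ}

lemma eigPlus_add_eigMinus (t : ℝ) : eigPlus t + eigMinus t = 2 + t := by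
  unfold eigPlus eigMinus
  ring

lemma eigPlus_mul_eigMinus (t : ℝ) : eigPlus t * eigMinus t = t := by
  unfold eigPlus eigMinus
  linear_combination -(Real.sq_sqrt (by positivity : (0 : ℝ) ≤ 4 + t ^ 2)) / 4

lemma sqrt_four_add_sq_le (ht : 0 ≤ t) : √(4 + t ^ 2) ≤ 2 + t :=
  Real.sqrt_le_iff.2 ⟨by linarith, by nlinarith⟩

lemma two_le_sqrt_four_add_sq (t : ℝ) : 2 ≤ √(4 + t ^ 2) :=
  Real.le_sqrt_of_sq_le (by nlinarith)

lemma eigMinus_nonneg (ht : 0 ≤ t) : 0 ≤ eigMinus t := by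
  unfold eigMinus
  linarith [sqrt_four_add_sq_le ht]

lemma two_le_eigPlus (ht : 0 ≤ t) : 2 ≤ eigPlus t := by
  unfold eigPlus
  linarith [two_le_sqrt_four_add_sq t]

lemma eigPlus_le (ht : 0 ≤ t) : eigPlus t ≤ 2 + t := by
  unfold eigPlus
  linarith [sqrt_four_add_sq_le ht]

lemma continuous_eigPlus : Continuous eigPlus := by
  unfold eigPlus
  fun_prop

lemma eigPlus_zero : eigPlus 0 = 2 := by
  norm_num [eigPlus, show (4 : ℝ) = 2 ^ 2 by norm_num]

end eigenvalues

lemma snorm_rpow_ones_add_diag {p : ℝ} (hp : 0 < p) {t : ℝ} (ht : 0 ≤ t) :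
    snorm p ((!![1, 1; 1, 1] : Matrix (Fin 2) (Fin 2) ℂ) + !![0, 0; 0, (t : ℂ)]) ^ p
      = eigPlus t ^ p + eigMinus t ^ p := by
  have hmat : (!![1, 1; 1, 1] : Matrix (Fin 2) (Fin 2) ℂ) + !![0, 0; 0, (t : ℂ)]
      = !![1, 1; 1, 1 + (t : ℂ)] := by
    ext i j
    fin_cases i <;> fin_cases j <;> simp
  rw [hmat]
  apply snorm_rpow_fin_two_of_isHermitian hp _ (by linarith [two_le_eigPlus ht])
    (eigMinus_nonneg ht)
  · rw [trace_fin_two_of, ← Complex.ofReal_add, eigPlus_add_eigMinus]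
    push_cast
    ring
  · rw [det_fin_two_of, ← Complex.ofReal_mul, eigPlus_mul_eigMinus]
    ring
  · ext i j
    fin_cases i <;> fin_cases j <;> simp [conjTranspose_apply]

/-- By Bernoulli's inequality `f t ^ p - c ^ p = O(f t - c) = O(t)`, which is `o(t ^ p)` as
`p < 1`. -/
lemma tendsto_rpow_sub_rpow_div_rpow {f : ℝ → ℝ} {c p : ℝ} (hc : 0 < c) (hp0 : 0 ≤ p)
    (hp1 : p < 1) (hf : ∀ t > 0, c ≤ f t ∧ f t ≤ c + t) :
    Tendsto (fun t => (f t ^ p - c ^ p) / t ^ p) (𝓝[>] 0) (𝓝 0) := by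
  have hbound : Tendsto (fun t : ℝ => p * c ^ p / c * t ^ (1 - p)) (𝓝[>] 0) (𝓝 0) := by
    have h := ((Real.continuousAt_rpow_const 0 (1 - p) (Or.inr (by linarith))).tendsto.mono_left
      (nhdsWithin_le_nhds (s := Set.Ioi 0))).const_mul (p * c ^ p / c)
    rwa [Real.zero_rpow (by linarith), mul_zero] at h
  refine tendsto_of_tendsto_of_tendsto_of_le_of_le' tendsto_const_nhds hbound ?_ ?_ <;>
    filter_upwards [self_mem_nhdsWithin] with t (ht : 0 < t)
  · have := Real.rpow_le_rpow hc.le (hf t ht).1 hp0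
    exact div_nonneg (by linarith) (by positivity)
  · obtain ⟨hlow, hup⟩ := hf t ht
    have hbernoulli : f t ^ p ≤ c ^ p * (1 + p * ((f t - c) / c)) := by
      calc f t ^ p = c ^ p * (1 + (f t - c) / c) ^ p := by
            rw [← Real.mul_rpow hc.le (by positivity)]
            congr 1
            field_simp
            ring
        _ ≤ c ^ p * (1 + p * ((f t - c) / c)) := by
            gcongr
            exact rpow_one_add_le_one_add_mul_self
              (by linarith [div_nonneg (sub_nonneg.2 hlow) hc.le]) hp0 hp1.le
    have hexpand : c ^ p * (1 + p * ((f t - c) / c)) = c ^ p + p * c ^ p / c * (f t - c) := by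
      field_simp
    rw [div_le_iff₀ (by positivity), mul_assoc, ← Real.rpow_add ht, sub_add_cancel,
      Real.rpow_one]
    calc f t ^ p - c ^ p ≤ p * c ^ p / c * (f t - c) := by linarith
      _ ≤ p * c ^ p / c * t := by gcongr; linarith

theorem stmt14 (p : ℝ) (hp0 : 0 < p) (hp1 : p < 1) :
    Filter.Tendsto
      (fun t : ℝ =>
        (snorm p ((!![1, 1; 1, 1] : Matrix (Fin 2) (Fin 2) ℂ) + !![0, 0; 0, (t : ℂ)]) ^ p
            - 2 ^ p) / t ^ p)
      (nhdsWithin 0 (Set.Ioi 0)) (nhds ((2 : ℝ) ^ (-p))) := by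
  have hlarge : Tendsto (fun t => (eigPlus t ^ p - 2 ^ p) / t ^ p) (𝓝[>] 0) (𝓝 0) :=
    tendsto_rpow_sub_rpow_div_rpow two_pos hp0.le hp1 fun t ht =>
      ⟨two_le_eigPlus ht.le, eigPlus_le ht.le⟩
  have hsmall : Tendsto (fun t => eigPlus t ^ (-p)) (𝓝[>] 0) (𝓝 (2 ^ (-p))) := by
    have h := (continuous_eigPlus.tendsto 0).rpow_const (p := -p) (Or.inl (by simp [eigPlus_zero]))
    rw [eigPlus_zero] at h
    exact h.mono_left nhdsWithin_le_nhds
  refine (zero_add (2 ^ (-p) : ℝ) ▸ hlarge.add hsmall).congr' ?_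
  filter_upwards [self_mem_nhdsWithin] with t (ht : 0 < t)
  have hratio : eigMinus t ^ p / t ^ p = eigPlus t ^ (-p) := by
    have hplus := two_le_eigPlus ht.le
    have hdiv : eigMinus t / t = (eigPlus t)⁻¹ := by
      field_simp
      linarith [eigPlus_mul_eigMinus t]
    rw [← Real.div_rpow (eigMinus_nonneg ht.le) ht.le, hdiv, Real.inv_rpow (by linarith),
      Real.rpow_neg (by linarith)]
  rw [snorm_rpow_ones_add_diag hp0 ht.le, ← hratio]
  ring
end
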